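/- arXiv:1401.7213 — 3 statements merged into one kernel-verified Lean document; each statement's English description precedes it below -/
import Mathlib

section
/- Let ξ : [0,T] → ℝ be nonnegative, nonincreasing, and convex (so that ξ is a completely monotone type kernel). Then ξ is of positive type: for every continuous function φ : [0,T] → ℝ, ∫₀ᵀ ∫₀ᵗ ξ(t−s) φ(t) φ(s) ds dt ≥ 0. -/
open MeasureTheory

/-!
On `0 < x < T` a convex nonincreasing kernel is `ξ x = ξ T + ∫ₓᵀ g` with `g = -ξ'₊` nonnegative and
nonincreasing. The constant part contributes `ξ T (∫₀ᵀ φ)² / 2 ≥ 0`, and by Fubini the tail part is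
`∫₀ᵀ g(u) K(u) du`, where `K(u)` is the form of the step kernel `1[x ≤ u]`. Integrating `K` over
`(0, c)` gives the form of the tent kernel `(c - x)₊`, which is nonnegative because a tent is the
autocorrelation of a window: `(c - (t - s))₊ = ∫ 1[r ≤ s] 1[t ≤ r + c] dr`. Writing the
nonincreasing `g` as a superposition of indicators of initial intervals `(0, c)` (layer cake) then
gives `∫₀ᵀ g K ≥ 0`.
-/

open Set Filter

theorem integral_lt_mul_eq_sq_div_two {μ : Measure ℝ} [SFinite μ] [NullSingletonClass μ]
    {f : ℝ → ℝ} (hf : Integrable f μ) :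
    ∫ p in {p : ℝ × ℝ | p.2 < p.1}, f p.1 * f p.2 ∂μ.prod μ = (∫ x, f x ∂μ) ^ 2 / 2 := by
  have hF : Integrable (fun p : ℝ × ℝ => f p.1 * f p.2) (μ.prod μ) := hf.mul_prod hf
  have hswap : ∫ p in {p : ℝ × ℝ | p.1 < p.2}, f p.1 * f p.2 ∂μ.prod μ
      = ∫ p in {p : ℝ × ℝ | p.2 < p.1}, f p.1 * f p.2 ∂μ.prod μ := by
    rw [← (Measure.measurePreserving_swap (μ := μ) (ν := μ)).setIntegral_preimage_emb
      MeasurableEquiv.prodComm.measurableEmbedding]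
    simp [mul_comm]
  have hdiag : ∀ᵐ p ∂μ.prod μ, p ∈ {p : ℝ × ℝ | p.2 < p.1} ∪ {p | p.1 < p.2} := by
    have : (μ.prod μ) {p : ℝ × ℝ | p.1 = p.2} = 0 := by
      rw [Measure.prod_apply (measurableSet_eq_fun measurable_fst measurable_snd)]
      simp [Set.preimage, measure_singleton]
    filter_upwards [measure_eq_zero_iff_ae_notMem.1 this] with p hp
    exact (lt_or_gt_of_ne hp).symm
  have hsplit := setIntegral_union (s := {p : ℝ × ℝ | p.2 < p.1}) (t := {p | p.1 < p.2})
    (disjoint_left.2 fun p (h₁ : p.2 < p.1) h₂ => lt_asymm h₁ h₂)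
    (measurableSet_lt measurable_fst measurable_snd) hF.integrableOn hF.integrableOn
  rw [Measure.restrict_eq_self_of_ae_mem hdiag, integral_prod_mul, hswap] at hsplit
  linarith

noncomputable def volterraIntegrand (k φ : ℝ → ℝ) (p : ℝ × ℝ) : ℝ :=
  k (p.1 - p.2) * φ p.1 * φ p.2

/-- For `μ = volume.restrict (Ioc 0 T)` this is `∫₀ᵀ ∫₀ᵗ k (t - s) φ t φ s ds dt`. -/
noncomputable def volterraForm (μ : Measure ℝ) (k φ : ℝ → ℝ) : ℝ :=
  ∫ p in {p : ℝ × ℝ | p.2 < p.1}, volterraIntegrand k φ p ∂μ.prod μ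

theorem volterraIntegrand_ae_eq {μ : Measure ℝ} [SFinite μ] {a b : ℝ} (hμ : ∀ᵐ t ∂μ, t ∈ Ioc a b)
    {k₁ k₂ : ℝ → ℝ} (h : EqOn k₁ k₂ (Ioo 0 (b - a))) (φ : ℝ → ℝ) :
    volterraIntegrand k₁ φ =ᵐ[(μ.prod μ).restrict {p | p.2 < p.1}] volterraIntegrand k₂ φ := by
  filter_upwards [ae_restrict_mem (measurableSet_lt measurable_snd measurable_fst),
    ae_restrict_of_ae (Measure.quasiMeasurePreserving_fst.ae hμ),
    ae_restrict_of_ae (Measure.quasiMeasurePreserving_snd.ae hμ)] with p (hp : p.2 < p.1) h₁ h₂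
  simp only [volterraIntegrand, h ⟨sub_pos.2 hp, by linarith [h₁.2, h₂.1]⟩]

section ConstAdd

variable {μ : Measure ℝ} {k φ : ℝ → ℝ} (c : ℝ)

theorem volterraIntegrand_const_add (p : ℝ × ℝ) :
    volterraIntegrand (fun x => c + k x) φ p = c * (φ p.1 * φ p.2) + volterraIntegrand k φ p := by
  simp only [volterraIntegrand]
  ring

theorem integrableOn_volterraIntegrand_const_add (hφ : Integrable φ μ)
    (hk : IntegrableOn (volterraIntegrand k φ) {p | p.2 < p.1} (μ.prod μ)) :
    IntegrableOn (volterraIntegrand (fun x => c + k x) φ) {p | p.2 < p.1} (μ.prod μ) := by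
  simp_rw [IntegrableOn, funext (volterraIntegrand_const_add c)]
  exact ((hφ.mul_prod hφ).integrableOn.const_mul c).add hk

theorem volterraForm_const_add [SFinite μ] [NullSingletonClass μ] (hφ : Integrable φ μ)
    (hk : IntegrableOn (volterraIntegrand k φ) {p | p.2 < p.1} (μ.prod μ)) :
    volterraForm μ (fun x => c + k x) φ = c * ((∫ x, φ x ∂μ) ^ 2 / 2) + volterraForm μ k φ := by
  simp only [volterraForm, volterraIntegrand_const_add]
  rw [integral_add ((hφ.mul_prod hφ).integrableOn.const_mul c) hk, integral_const_mul,
    integral_lt_mul_eq_sq_div_two hφ]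

end ConstAdd

theorem intervalIntegral_intervalIntegral_eq_setIntegral_lt {a b : ℝ} (hab : a ≤ b) {F : ℝ → ℝ → ℝ}
    (hF : IntegrableOn (fun p : ℝ × ℝ => F p.1 p.2) {p | p.2 < p.1}
      ((volume.restrict (Ioc a b)).prod (volume.restrict (Ioc a b)))) :
    ∫ t in a..b, ∫ s in a..t, F t s = ∫ p in {p : ℝ × ℝ | p.2 < p.1}, F p.1 p.2
      ∂(volume.restrict (Ioc a b)).prod (volume.restrict (Ioc a b)) := by
  have hS : MeasurableSet {p : ℝ × ℝ | p.2 < p.1} := measurableSet_lt measurable_snd measurable_fst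
  rw [← integral_indicator hS, integral_prod _ ((integrable_indicator_iff hS).2 hF),
    intervalIntegral.integral_of_le hab]
  refine setIntegral_congr_fun measurableSet_Ioc fun t ht => ?_
  have hI : Iio t ∩ Ioc a b = Ioo a t := by
    ext s
    exact ⟨fun h => ⟨h.2.1, h.1⟩, fun h => ⟨h.2, h.1, h.2.le.trans ht.2⟩⟩
  rw [show (fun s => {p : ℝ × ℝ | p.2 < p.1}.indicator (fun p => F p.1 p.2) (t, s))
      = (Iio t).indicator (F t) from rfl, integral_indicator measurableSet_Iio,
    Measure.restrict_restrict measurableSet_Iio, hI, intervalIntegral.integral_of_le ht.1.le,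
    integral_Ioc_eq_integral_Ioo]

section Tent

variable {μ : Measure ℝ} {φ : ℝ → ℝ} {a : ℝ}

noncomputable def windowIntegrand (a : ℝ) (φ : ℝ → ℝ) : (ℝ × ℝ) × ℝ → ℝ :=
  {q | q.1.1 - a ≤ q.2 ∧ q.2 ≤ q.1.2}.indicator fun q => φ q.1.1 * φ q.1.2

/-- For `s < t`, the windows `[r, r + a]` containing both `s` and `t` are those with
`r ∈ [t - a, s]`. -/
theorem windowIntegrand_of_lt {p : ℝ × ℝ} (hp : p.2 < p.1) (r : ℝ) :
    windowIntegrand a φ (p, r)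
      = (Icc r (r + a)).indicator φ p.1 * (Icc r (r + a)).indicator φ p.2 := by
  simp only [windowIntegrand, indicator, mem_ofPred_eq, mem_Icc]
  split_ifs <;> grind

theorem integral_windowIntegrand (p : ℝ × ℝ) :
    ∫ r, windowIntegrand a φ (p, r) = max (a - (p.1 - p.2)) 0 * (φ p.1 * φ p.2) := by
  rw [show (fun r => windowIntegrand a φ (p, r))
      = (Icc (p.1 - a) p.2).indicator fun _ => φ p.1 * φ p.2 from rfl,
    integral_indicator_const _ measurableSet_Icc, Real.volume_real_Icc, smul_eq_mul]
  ring_nf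

theorem norm_windowIntegrand (q : (ℝ × ℝ) × ℝ) :
    ‖windowIntegrand a φ q‖ = windowIntegrand a (fun x => ‖φ x‖) q := by
  simp only [windowIntegrand, indicator_apply]
  split_ifs <;> simp

theorem integrable_windowIntegrand (hφ : Integrable φ μ) :
    Integrable (windowIntegrand a φ) (((μ.prod μ).restrict {p | p.2 < p.1}).prod volume) := by
  have hφφ := (hφ.mul_prod hφ).restrict (s := {p : ℝ × ℝ | p.2 < p.1})
  have hm : AEStronglyMeasurable (windowIntegrand a φ)
      (((μ.prod μ).restrict {p | p.2 < p.1}).prod volume) :=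
    hφφ.aestronglyMeasurable.comp_fst.indicator
      ((measurableSet_le ((measurable_fst.comp measurable_fst).sub_const a) measurable_snd).inter
        (measurableSet_le measurable_snd (measurable_snd.comp measurable_fst)))
  refine (integrable_prod_iff hm).2 ⟨ae_of_all _ fun p => ?_, ?_⟩
  · exact (integrable_indicator_iff (measurableSet_Icc (a := p.1 - a) (b := p.2))).2
      (integrableOn_const (C := φ p.1 * φ p.2) measure_Icc_lt_top.ne)
  · simp_rw [norm_windowIntegrand, integral_windowIntegrand, ← norm_mul]
    refine hφφ.norm.bdd_mul (c := max a 0) (by fun_prop) ?_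
    filter_upwards [ae_restrict_mem (measurableSet_lt measurable_snd measurable_fst)]
      with p (hp : p.2 < p.1)
    rw [Real.norm_of_nonneg (le_max_right _ _)]
    exact max_le_max (by linarith) le_rfl

theorem volterraForm_tent_nonneg [IsFiniteMeasure μ] [NullSingletonClass μ] (hφ : Integrable φ μ)
    (a : ℝ) : 0 ≤ volterraForm μ (fun x => max (a - x) 0) φ := by
  have hS : MeasurableSet {p : ℝ × ℝ | p.2 < p.1} := measurableSet_lt measurable_snd measurable_fst
  calc 0 ≤ ∫ r, (∫ x, (Icc r (r + a)).indicator φ x ∂μ) ^ 2 / 2 :=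
        integral_nonneg fun r => by positivity
    _ = ∫ r, (∫ p in {p : ℝ × ℝ | p.2 < p.1}, windowIntegrand a φ (p, r) ∂μ.prod μ) := by
        congr 1 with r
        rw [setIntegral_congr_fun hS fun p hp => windowIntegrand_of_lt hp r,
          integral_lt_mul_eq_sq_div_two (hφ.indicator measurableSet_Icc)]
    _ = ∫ p in {p : ℝ × ℝ | p.2 < p.1}, (∫ r, windowIntegrand a φ (p, r)) ∂μ.prod μ :=
        (integral_integral_swap (f := fun p r => windowIntegrand a φ (p, r))
          (integrable_windowIntegrand hφ)).symm
    _ = volterraForm μ (fun x => max (a - x) 0) φ := by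
        simp_rw [integral_windowIntegrand, volterraForm, volterraIntegrand, mul_assoc]

end Tent

noncomputable def tailKernel (ν : Measure ℝ) (w : ℝ → ℝ) (x : ℝ) : ℝ := ∫ u in Ici x, w u ∂ν

section Mixture

variable {μ ν : Measure ℝ} {w φ : ℝ → ℝ}

noncomputable def tailIntegrand (w φ : ℝ → ℝ) : ℝ × ℝ × ℝ → ℝ :=
  {q | q.2.1 - q.2.2 ≤ q.1}.indicator fun q => w q.1 * (φ q.2.1 * φ q.2.2)

theorem integrable_tailIntegrand (hw : Integrable w ν) (hφ : Integrable φ μ) :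
    Integrable (tailIntegrand w φ) (ν.prod ((μ.prod μ).restrict {p | p.2 < p.1})) :=
  (hw.mul_prod (hφ.mul_prod hφ).restrict).indicator
    (measurableSet_le ((measurable_fst.comp measurable_snd).sub
      (measurable_snd.comp measurable_snd)) measurable_fst)

theorem volterraIntegrand_tailKernel (p : ℝ × ℝ) :
    volterraIntegrand (tailKernel ν w) φ p = ∫ u, tailIntegrand w φ (u, p) ∂ν := by
  simp only [volterraIntegrand, tailKernel, ← integral_indicator measurableSet_Ici,
    ← integral_mul_const, mul_assoc]
  congr 1 with u
  simp only [tailIntegrand, indicator_apply, mem_Ici, mem_ofPred_eq]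
  split_ifs <;> ring

theorem mul_volterraForm_indicator_Iic (u : ℝ) : w u * volterraForm μ ((Iic u).indicator 1) φ =
    ∫ p in {p : ℝ × ℝ | p.2 < p.1}, tailIntegrand w φ (u, p) ∂μ.prod μ := by
  simp only [volterraForm, ← integral_const_mul]
  congr 1 with p
  simp only [volterraIntegrand, tailIntegrand, indicator_apply, mem_ofPred_eq, mem_Iic]
  split_ifs <;> simp

variable [SFinite μ]

theorem integrableOn_volterraIntegrand_tailKernel [SFinite ν] (hw : Integrable w ν)
    (hφ : Integrable φ μ) :
    IntegrableOn (volterraIntegrand (tailKernel ν w) φ) {p | p.2 < p.1} (μ.prod μ) := by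
  simp_rw [IntegrableOn, funext volterraIntegrand_tailKernel]
  exact (integrable_tailIntegrand hw hφ).integral_prod_right

theorem integrable_mul_volterraForm_indicator_Iic (hw : Integrable w ν) (hφ : Integrable φ μ) :
    Integrable (fun u => w u * volterraForm μ ((Iic u).indicator 1) φ) ν := by
  simp_rw [mul_volterraForm_indicator_Iic]
  exact (integrable_tailIntegrand hw hφ).integral_prod_left

theorem volterraForm_tailKernel [SFinite ν] (hw : Integrable w ν) (hφ : Integrable φ μ) :
    volterraForm μ (tailKernel ν w) φ = ∫ u, w u * volterraForm μ ((Iic u).indicator 1) φ ∂ν := by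
  simp_rw [mul_volterraForm_indicator_Iic, volterraForm, volterraIntegrand_tailKernel]
  exact (integral_integral_swap (f := fun u p => tailIntegrand w φ (u, p))
    (integrable_tailIntegrand hw hφ)).symm

end Mixture

theorem tailKernel_restrict_Ioo_one {a c x : ℝ} (hx : a < x) :
    tailKernel (volume.restrict (Ioo a c)) (fun _ => 1) x = max (c - x) 0 := by
  have hI : Ici x ∩ Ioo a c = Ico x c := by
    ext u
    exact ⟨fun h => ⟨h.1, h.2.2⟩, fun h => ⟨h.1, hx.trans_le h.1, h.2⟩⟩
  rw [tailKernel, setIntegral_const, measureReal_restrict_apply measurableSet_Ici, hI,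
    Real.volume_real_Ico, smul_eq_mul, mul_one]

theorem setIntegral_Ioo_volterraForm_indicator_Iic_nonneg {μ : Measure ℝ} [IsFiniteMeasure μ]
    [NullSingletonClass μ] {φ : ℝ → ℝ} (hφ : Integrable φ μ) (c : ℝ) :
    0 ≤ ∫ u in Ioo 0 c, volterraForm μ ((Iic u).indicator 1) φ := by
  have htent : volterraForm μ (tailKernel (volume.restrict (Ioo 0 c)) fun _ => 1) φ
      = volterraForm μ (fun x => max (c - x) 0) φ :=
    setIntegral_congr_fun (measurableSet_lt measurable_snd measurable_fst)
      fun p (hp : p.2 < p.1) => by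
        simp only [volterraIntegrand, tailKernel_restrict_Ioo_one (sub_pos.2 hp)]
  have hmix := volterraForm_tailKernel
    (integrableOn_const (C := (1 : ℝ)) (measure_Ioo_lt_top (μ := volume) (a := 0) (b := c)).ne) hφ
  simp only [one_mul] at hmix
  rw [← hmix, htent]
  exact volterraForm_tent_nonneg hφ c

theorem exists_Ioo_subset_subset_Ioc_of_downward_closed {a b : ℝ} {S : Set ℝ} (hS : S ⊆ Ioo a b)
    (hdown : ∀ u ∈ S, ∀ v ∈ Ioc a u, v ∈ S) : ∃ c ≤ b, Ioo a c ⊆ S ∧ S ⊆ Ioc a c := by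
  rcases S.eq_empty_or_nonempty with rfl | ⟨u₀, hu₀⟩
  · exact ⟨min a b, min_le_right a b, by simp, empty_subset _⟩
  have hbdd : BddAbove S := ⟨b, fun u hu => (hS hu).2.le⟩
  refine ⟨sSup S, csSup_le ⟨u₀, hu₀⟩ fun u hu => (hS hu).2.le, fun v hv => ?_,
    fun u hu => ⟨(hS hu).1, le_csSup hbdd hu⟩⟩
  obtain ⟨u, hu, hvu⟩ := exists_lt_of_lt_csSup ⟨u₀, hu₀⟩ hv.2
  exact hdown u hu v ⟨hv.1, hvu.le⟩

theorem setIntegral_Ioi_indicator_Iio (x c : ℝ) :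
    ∫ t in Ioi 0, (Iio x).indicator (fun _ => c) t = max x 0 * c := by
  rw [integral_indicator_const _ measurableSet_Iio, measureReal_restrict_apply measurableSet_Iio,
    Iio_inter_Ioi, Real.volume_real_Ioo, sub_zero, smul_eq_mul]

theorem integrable_indicator_Iio_prod {μ : Measure ℝ} [SFinite μ] {g K : ℝ → ℝ}
    (hg : AEMeasurable g μ) (hK : AEStronglyMeasurable K μ)
    (hgK : Integrable (fun u => max (g u) 0 * K u) μ) :
    Integrable (fun q : ℝ × ℝ => (Iio (g q.1)).indicator (fun _ => K q.1) q.2)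
      (μ.prod (volume.restrict (Ioi 0))) := by
  have hm : AEStronglyMeasurable (fun q : ℝ × ℝ => (Iio (g q.1)).indicator (fun _ => K q.1) q.2)
      (μ.prod (volume.restrict (Ioi 0))) :=
    ((Measurable.ite (measurableSet_lt (measurable_fst.comp measurable_snd) measurable_fst)
      (measurable_snd.comp measurable_snd) measurable_const).comp_aemeasurable
      (hg.comp_fst.prodMk (measurable_snd.aemeasurable.prodMk hK.aemeasurable.comp_fst))
      ).aestronglyMeasurable
  refine (integrable_prod_iff hm).2 ⟨ae_of_all _ fun u => ?_, ?_⟩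
  · refine (integrable_indicator_iff (measurableSet_Iio (a := g u))).2
      (integrableOn_const (C := K u) ?_)
    rw [Measure.restrict_apply measurableSet_Iio, Iio_inter_Ioi]
    exact measure_Ioo_lt_top.ne
  · simp_rw [norm_indicator_eq_indicator_norm, setIntegral_Ioi_indicator_Iio]
    exact hgK.norm.congr (ae_of_all _ fun u => by
      simp only [norm_mul, Real.norm_of_nonneg (le_max_right (g u) 0)])

theorem setIntegral_Ioo_mul_nonneg_of_antitoneOn {a b : ℝ} {g K : ℝ → ℝ}
    (hg : AntitoneOn g (Ioo a b)) (hg₀ : ∀ u ∈ Ioo a b, 0 ≤ g u) (hK : IntegrableOn K (Ioo a b))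
    (hgK : IntegrableOn (fun u => g u * K u) (Ioo a b))
    (hKc : ∀ c ≤ b, 0 ≤ ∫ u in Ioo a c, K u) :
    0 ≤ ∫ u in Ioo a b, g u * K u := by
  set F : ℝ × ℝ → ℝ := fun q => (Iio (g q.1)).indicator (fun _ => K q.1) q.2
  have hg_eq : ∀ᵐ u ∂volume.restrict (Ioo a b), max (g u) 0 = g u := by
    filter_upwards [ae_restrict_mem measurableSet_Ioo] with u hu using max_eq_left (hg₀ u hu)
  have hF : Integrable F ((volume.restrict (Ioo a b)).prod (volume.restrict (Ioi 0))) :=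
    integrable_indicator_Iio_prod (aemeasurable_restrict_of_antitoneOn measurableSet_Ioo hg)
      hK.aestronglyMeasurable (hgK.congr (by filter_upwards [hg_eq] with u hu; rw [hu]))
  have hslice : ∀ t, 0 ≤ ∫ u in Ioo a b, F (u, t) := by
    intro t
    -- the superlevel set `{g > t}` is an initial segment of `(a, b)`
    obtain ⟨c, hcb, hcS, hSc⟩ := exists_Ioo_subset_subset_Ioc_of_downward_closed
      (S := {u | u ∈ Ioo a b ∧ t < g u}) (fun u hu => hu.1) fun u hu v hv =>
        ⟨⟨hv.1, hv.2.trans_lt hu.1.2⟩, hu.2.trans_le (hg ⟨hv.1, hv.2.trans_lt hu.1.2⟩ hu.1 hv.2)⟩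
    have hFc : (fun u => F (u, t)) =ᵐ[volume.restrict (Ioo a b)] (Ioo a c).indicator K := by
      filter_upwards [ae_restrict_mem measurableSet_Ioo,
        ae_restrict_of_ae (measure_eq_zero_iff_ae_notMem.1 (measure_singleton c))] with u hu huc
      by_cases h : u ∈ Ioo a c
      · simp [F, indicator_of_mem h, (hcS h).2]
      · have : ¬ t < g u := fun htu => h ⟨hu.1, lt_of_le_of_ne (hSc ⟨hu, htu⟩).2 huc⟩
        simp [F, indicator_of_notMem h, this]
    rw [integral_congr_ae hFc, integral_indicator measurableSet_Ioo,
      Measure.restrict_restrict measurableSet_Ioo, inter_eq_left.2 (Ioo_subset_Ioo_right hcb)]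
    exact hKc c hcb
  calc (0 : ℝ) ≤ ∫ t in Ioi 0, ∫ u in Ioo a b, F (u, t) := integral_nonneg hslice
    _ = ∫ u in Ioo a b, ∫ t in Ioi 0, F (u, t) :=
        (integral_integral_swap (f := fun u t => F (u, t)) hF).symm
    _ = ∫ u in Ioo a b, g u * K u := by
        refine integral_congr_ae ?_
        filter_upwards [hg_eq] with u hu
        simp only [F]
        rw [setIntegral_Ioi_indicator_Iio, hu]

theorem volterraForm_tailKernel_nonneg {μ : Measure ℝ} [IsFiniteMeasure μ] [NullSingletonClass μ]
    {φ : ℝ → ℝ} (hφ : Integrable φ μ) {b : ℝ} {g : ℝ → ℝ} (hg : AntitoneOn g (Ioo 0 b))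
    (hg₀ : ∀ u ∈ Ioo 0 b, 0 ≤ g u) (hgi : IntegrableOn g (Ioo 0 b)) :
    0 ≤ volterraForm μ (tailKernel (volume.restrict (Ioo 0 b)) g) φ := by
  have hK := integrable_mul_volterraForm_indicator_Iic
    (integrableOn_const (C := (1 : ℝ)) (measure_Ioo_lt_top (μ := volume) (a := 0) (b := b)).ne) hφ
  simp only [one_mul] at hK
  rw [volterraForm_tailKernel hgi hφ]
  exact setIntegral_Ioo_mul_nonneg_of_antitoneOn hg hg₀ hK
    (integrable_mul_volterraForm_indicator_Iic hgi hφ)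
    fun c _ => setIntegral_Ioo_volterraForm_indicator_Iic_nonneg hφ c

section ConvexAntitone

variable {a b : ℝ} {f : ℝ → ℝ}

theorem ConvexOn.continuousWithinAt_Iic_of_antitoneOn (hconv : ConvexOn ℝ (Icc a b) f)
    (hanti : AntitoneOn f (Icc a b)) (hab : a < b) : ContinuousWithinAt f (Iic b) b := by
  rw [← continuousWithinAt_Icc_iff_Iic hab]
  have hchord : Tendsto (fun w => f b + (b - w) / (b - a) * (f a - f b)) (nhdsWithin b (Icc a b))
      (nhds (f b)) := by
    have : Continuous fun w => f b + (b - w) / (b - a) * (f a - f b) := by fun_prop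
    simpa using (this.tendsto b).mono_left nhdsWithin_le_nhds
  refine tendsto_of_tendsto_of_tendsto_of_le_of_le' tendsto_const_nhds hchord ?_ ?_
  · filter_upwards [self_mem_nhdsWithin] with w hw
    exact hanti hw ⟨hab.le, le_rfl⟩ hw.2
  · filter_upwards [self_mem_nhdsWithin] with w hw
    have hba : 0 < b - a := sub_pos.2 hab
    have := hconv.2 ⟨le_rfl, hab.le⟩ ⟨hab.le, le_rfl⟩ (div_nonneg (sub_nonneg.2 hw.2) hba.le)
      (div_nonneg (sub_nonneg.2 hw.1) hba.le) (by field_simp; ring)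
    rw [show ((b - w) / (b - a)) • a + ((w - a) / (b - a)) • b = w by
      simp only [smul_eq_mul]; field_simp; ring] at this
    refine this.trans_eq ?_
    simp only [smul_eq_mul]; field_simp; ring

theorem ConvexOn.rightDeriv_nonpos_of_antitoneOn (hconv : ConvexOn ℝ (Icc a b) f)
    (hanti : AntitoneOn f (Icc a b)) {x : ℝ} (hx : x ∈ Ioo a b) : derivWithin f (Ioi x) x ≤ 0 := by
  have hb : b ∈ Icc a b := ⟨(hx.1.trans hx.2).le, le_rfl⟩
  refine (hconv.rightDeriv_le_slope_of_mem_interior (by rwa [interior_Icc]) hb hx.2).trans ?_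
  rw [slope_def_field]
  exact div_nonpos_of_nonpos_of_nonneg (sub_nonpos.2 (hanti ⟨hx.1.le, hx.2.le⟩ hb hx.2.le))
    (sub_nonneg.2 hx.2.le)

theorem ConvexOn.integrableOn_rightDeriv_Ioo (hconv : ConvexOn ℝ (Icc a b) f)
    (hanti : AntitoneOn f (Icc a b)) {x : ℝ} (hx : x ∈ Ioo a b) :
    IntegrableOn (fun u => derivWithin f (Ioi u) u) (Ioo x b) := by
  refine Measure.integrableOn_of_bounded measure_Ioo_lt_top.ne
    (measurable_derivWithin_Ioi f).aestronglyMeasurable (M := -derivWithin f (Ioi x) x) ?_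
  filter_upwards [ae_restrict_mem measurableSet_Ioo] with u hu
  have hu' : u ∈ Ioo a b := ⟨hx.1.trans hu.1, hu.2⟩
  have hmono := hconv.monotoneOn_rightDeriv (by rwa [interior_Icc]) (by rwa [interior_Icc]) hu.1.le
  rw [Real.norm_of_nonpos (hconv.rightDeriv_nonpos_of_antitoneOn hanti hu')]
  exact neg_le_neg hmono

theorem ConvexOn.intervalIntegral_rightDeriv (hconv : ConvexOn ℝ (Icc a b) f)
    (hanti : AntitoneOn f (Icc a b)) {x : ℝ} (hx : x ∈ Ioo a b) :
    ∫ u in x..b, derivWithin f (Ioi u) u = f b - f x := by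
  have hcont : ContinuousOn f (Ioc a b) :=
    (hconv.subset Ioc_subset_Icc_self (convex_Ioc a b)).continuousOn_Ioc
      (hconv.continuousWithinAt_Iic_of_antitoneOn hanti (hx.1.trans hx.2))
  refine intervalIntegral.integral_eq_sub_of_hasDeriv_right_of_le hx.2.le
    (hcont.mono (Icc_subset_Ioc_iff hx.2.le |>.2 ⟨hx.1, le_rfl⟩)) (fun u hu => ?_)
    ((intervalIntegrable_iff_integrableOn_Ioo_of_le hx.2.le).2
      (hconv.integrableOn_rightDeriv_Ioo hanti hx))
  exact hconv.hasDerivWithinAt_rightDeriv_of_mem_interior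
    (by rw [interior_Icc]; exact ⟨hx.1.trans hu.1, hu.2⟩)

theorem ConvexOn.integrableOn_rightDeriv (hconv : ConvexOn ℝ (Icc a b) f)
    (hanti : AntitoneOn f (Icc a b)) :
    IntegrableOn (fun u => derivWithin f (Ioi u) u) (Ioo a b) := by
  rcases le_or_gt b a with hba | hab
  · simp [Ioo_eq_empty (not_lt.2 hba)]
  set x : ℕ → ℝ := fun n => a + (b - a) / 2 * (1 / ((n : ℝ) + 1))
  have hx : ∀ n, x n ∈ Ioo a b := fun n => by
    have h1 : 0 < 1 / ((n : ℝ) + 1) := by positivity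
    have h2 : 1 / ((n : ℝ) + 1) ≤ 1 :=
      div_le_one_of_le₀ (by linarith [n.cast_nonneg (α := ℝ)]) (by positivity)
    constructor <;> simp only [x] <;> nlinarith
  have hlim : Tendsto x atTop (nhds a) := by
    simpa [x] using (tendsto_one_div_add_atTop_nhds_zero_nat.const_mul ((b - a) / 2)).const_add a
  refine Iff.mp integrableOn_Ioc_iff_integrableOn_Ioo ?_
  refine integrableOn_Ioc_of_intervalIntegral_norm_bounded_left (I := f a - f b)
    (fun n => Iff.mpr integrableOn_Ioc_iff_integrableOn_Ioo
      (hconv.integrableOn_rightDeriv_Ioo hanti (hx n))) hlim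
    (Eventually.of_forall fun n => ?_)
  have hxn := hx n
  calc ∫ u in Ioc (x n) b, ‖derivWithin f (Ioi u) u‖
      = ∫ u in Ioo (x n) b, -derivWithin f (Ioi u) u := by
        rw [integral_Ioc_eq_integral_Ioo]
        exact setIntegral_congr_fun measurableSet_Ioo fun u hu =>
          Real.norm_of_nonpos (hconv.rightDeriv_nonpos_of_antitoneOn hanti ⟨hxn.1.trans hu.1, hu.2⟩)
    _ = f (x n) - f b := by
        rw [integral_neg, ← integral_Ioc_eq_integral_Ioo,
          ← intervalIntegral.integral_of_le hxn.2.le, hconv.intervalIntegral_rightDeriv hanti hxn,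
          neg_sub]
    _ ≤ f a - f b := by
        linarith [hanti ⟨le_rfl, hab.le⟩ ⟨hxn.1.le, hxn.2.le⟩ hxn.1.le]

theorem ConvexOn.tailKernel_neg_rightDeriv (hconv : ConvexOn ℝ (Icc a b) f)
    (hanti : AntitoneOn f (Icc a b)) {x : ℝ} (hx : x ∈ Ioo a b) :
    tailKernel (volume.restrict (Ioo a b)) (fun u => -derivWithin f (Ioi u) u) x = f x - f b := by
  have hI : Ici x ∩ Ioo a b = Ico x b := by
    ext u
    exact ⟨fun h => ⟨h.1, h.2.2⟩, fun h => ⟨h.1, hx.1.trans_le h.1, h.2⟩⟩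
  rw [tailKernel, Measure.restrict_restrict measurableSet_Ici, hI, integral_Ico_eq_integral_Ioo,
    ← integral_Ioc_eq_integral_Ioo, ← intervalIntegral.integral_of_le hx.2.le,
    intervalIntegral.integral_neg, hconv.intervalIntegral_rightDeriv hanti hx, neg_sub]

end ConvexAntitone

/-- A nonnegative, nonincreasing, convex kernel `ξ` on `[0,T]` is of positive type:
for every continuous `φ` on `[0,T]`,
`∫₀ᵀ ∫₀ᵗ ξ(t-s) φ(t) φ(s) ds dt ≥ 0`. -/
theorem convex_monotone_kernel_positive_type (T : ℝ) (hT : 0 ≤ T) (ξ : ℝ → ℝ)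
    (hnn : ∀ t ∈ Set.Icc (0:ℝ) T, 0 ≤ ξ t)
    (hanti : AntitoneOn ξ (Set.Icc 0 T))
    (hconv : ConvexOn ℝ (Set.Icc 0 T) ξ)
    (φ : ℝ → ℝ) (hφ : ContinuousOn φ (Set.Icc 0 T)) :
    0 ≤ ∫ t in (0:ℝ)..T, ∫ s in (0:ℝ)..t, ξ (t - s) * φ t * φ s := by
  set μ := volume.restrict (Ioc 0 T)
  set g : ℝ → ℝ := fun u => -derivWithin ξ (Ioi u) u
  set G := tailKernel (volume.restrict (Ioo 0 T)) g
  have hφμ : Integrable φ μ := hφ.integrableOn_Icc.mono_set Ioc_subset_Icc_self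
  have hgi : IntegrableOn g (Ioo 0 T) := (hconv.integrableOn_rightDeriv hanti).neg
  have hξ : EqOn ξ (fun x => ξ T + G x) (Ioo 0 T) := fun x hx => by
    simp only [G, g, hconv.tailKernel_neg_rightDeriv hanti hx, add_sub_cancel]
  have hae := volterraIntegrand_ae_eq (μ := μ) (ae_restrict_mem measurableSet_Ioc)
    (by rwa [sub_zero]) φ
  have hG := integrableOn_volterraIntegrand_tailKernel hgi hφμ
  have hmono : MonotoneOn (fun u => derivWithin ξ (Ioi u) u) (Ioo 0 T) := by
    simpa only [interior_Icc] using hconv.monotoneOn_rightDeriv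
  rw [intervalIntegral_intervalIntegral_eq_setIntegral_lt hT
    ((integrableOn_volterraIntegrand_const_add (ξ T) hφμ hG).congr_fun_ae hae.symm)]
  change 0 ≤ volterraForm μ ξ φ
  rw [show volterraForm μ ξ φ = volterraForm μ (fun x => ξ T + G x) φ from integral_congr_ae hae,
    volterraForm_const_add _ hφμ hG]
  exact add_nonneg (mul_nonneg (hnn T ⟨hT, le_rfl⟩) (by positivity))
    (volterraForm_tailKernel_nonneg hφμ hmono.neg
      (fun u hu => neg_nonneg.2 (hconv.rightDeriv_nonpos_of_antitoneOn hanti hu)) hgi)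
end

section
/- Let K ∈ L¹(0,T) be nonnegative with ξ(t) = ∫ₜᵀ K(s)ds, ξ(0) = κ, and let θ, v : [0,T] → V be such that v(t) = ∫ₜ^ε θ(τ)dτ (so v(ε) = 0, v̇ = −θ). Then −2∫₀^ε ∫₀ᵗ K(t−s) a(θ(s), v(t)) ds dt = −κ‖v(0)‖²_V + 2∫₀^ε ∫ₛ^ε ξ(t−s) a(θ(s), θ(t)) dt ds, where a is a symmetric bilinear form and ‖w‖²_V = a(w,w). -/
open MeasureTheory Set
open scoped RealInnerProductSpace

/-!
Extend `K` by zero outside `[0, T]` to an integrable kernel `W`. Fubini on the triangle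
`s ≤ t` moves the `s`-integral outside; writing `v t = ∫ τ in t..ε, θ τ` and applying Fubini
once more, now in `(t, τ)`, replaces the kernel by its primitive `∫ u in 0..τ - s, W u`, which
is `κ - ξ (τ - s)`. This is the paper's integration by parts, done without differentiating `ξ`,
which is only absolutely continuous. What remains of the `κ`-part is
`∫∫_{s ≤ t} ⟪θ s, θ t⟫ = ‖v 0‖² / 2`, because `‖v‖²` has derivative `-2 ⟪θ, v⟫` and `v ε = 0`.
-/

section Triangle

variable {E : Type*} [NormedAddCommGroup E] [NormedSpace ℝ E] {a b : ℝ}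

lemma intervalIntegral_eq_setIntegral_indicator_Iic {F : ℝ → E} {t : ℝ} (ht : t ∈ Icc a b) :
    ∫ s in a..t, F s = ∫ s in Ioc a b, (Iic t).indicator F s := by
  rw [setIntegral_indicator measurableSet_Iic, Ioc_inter_Iic, inf_eq_right.mpr ht.2,
    intervalIntegral.integral_of_le ht.1]

lemma intervalIntegral_eq_setIntegral_indicator_Ici {F : ℝ → E} {s : ℝ} (hs : s ∈ Ioc a b) :
    ∫ t in s..b, F t = ∫ t in Ioc a b, (Ici s).indicator F t := by
  have hinter : Ioc a b ∩ Ici s = Icc s b := by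
    ext x
    simp only [mem_inter_iff, mem_Ioc, mem_Ici, mem_Icc]
    constructor
    · rintro ⟨⟨-, hxb⟩, hsx⟩
      exact ⟨hsx, hxb⟩
    · rintro ⟨hsx, hxb⟩
      exact ⟨⟨hs.1.trans_le hsx, hxb⟩, hsx⟩
  rw [setIntegral_indicator measurableSet_Ici, hinter, integral_Icc_eq_integral_Ioc,
    intervalIntegral.integral_of_le hs.2]

theorem integral_integral_swap_triangle (hab : a ≤ b) {f : ℝ → ℝ → E}
    (hf : Integrable (Function.uncurry f)
      ((volume.restrict (Ioc a b)).prod (volume.restrict (Ioc a b)))) :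
    ∫ t in a..b, ∫ s in a..t, f s t = ∫ s in a..b, ∫ t in s..b, f s t := by
  set g : ℝ × ℝ → E := {p : ℝ × ℝ | p.1 ≤ p.2}.indicator (Function.uncurry f)
  have hg : Integrable g ((volume.restrict (Ioc a b)).prod (volume.restrict (Ioc a b))) :=
    hf.indicator (measurableSet_le measurable_fst measurable_snd)
  calc ∫ t in a..b, ∫ s in a..t, f s t
      = ∫ t in Ioc a b, ∫ s in Ioc a b, g (s, t) := by
        rw [intervalIntegral.integral_of_le hab]
        refine setIntegral_congr_fun measurableSet_Ioc fun t ht => ?_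
        rw [intervalIntegral_eq_setIntegral_indicator_Iic (Ioc_subset_Icc_self ht)]
        rfl
    _ = ∫ s in Ioc a b, ∫ t in Ioc a b, g (s, t) :=
        (integral_integral_swap (f := fun s t => g (s, t)) hg).symm
    _ = ∫ s in a..b, ∫ t in s..b, f s t := by
        rw [intervalIntegral.integral_of_le hab]
        refine setIntegral_congr_fun measurableSet_Ioc fun s hs => ?_
        rw [intervalIntegral_eq_setIntegral_indicator_Ici hs]
        rfl

lemma integral_integral_congr_upper {f g : ℝ → ℝ → E} (hab : a ≤ b)
    (h : ∀ s t, a ≤ s → s ≤ t → t ≤ b → f s t = g s t) :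
    ∫ s in a..b, ∫ t in s..b, f s t = ∫ s in a..b, ∫ t in s..b, g s t := by
  refine intervalIntegral.integral_congr fun s hs =>
    intervalIntegral.integral_congr fun t ht => ?_
  rw [uIcc_of_le hab] at hs
  rw [uIcc_of_le hs.2] at ht
  exact h s t hs.1 ht.1 ht.2

lemma integral_integral_congr_lower {f g : ℝ → ℝ → E} (hab : a ≤ b)
    (h : ∀ s t, a ≤ s → s ≤ t → t ≤ b → f s t = g s t) :
    ∫ t in a..b, ∫ s in a..t, f s t = ∫ t in a..b, ∫ s in a..t, g s t := by
  refine intervalIntegral.integral_congr fun t ht =>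
    intervalIntegral.integral_congr fun s hs => ?_
  rw [uIcc_of_le hab] at ht
  rw [uIcc_of_le ht.1] at hs
  exact h s t hs.1 hs.2 ht.2

lemma intervalIntegrable_integral_upper {f : ℝ → ℝ → E}
    (hf : Continuous (Function.uncurry f)) :
    IntervalIntegrable (fun s => ∫ t in s..b, f s t) volume a b := by
  simp_rw [intervalIntegral.integral_symm b]
  exact (intervalIntegral.continuous_parametric_intervalIntegral_of_continuous hf
    continuous_id).neg.intervalIntegrable a b

theorem integral_integral_sub_of_continuous {f g : ℝ → ℝ → E}
    (hf : Continuous (Function.uncurry f)) (hg : Continuous (Function.uncurry g)) :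
    ∫ s in a..b, ∫ t in s..b, (f s t - g s t)
      = (∫ s in a..b, ∫ t in s..b, f s t) - ∫ s in a..b, ∫ t in s..b, g s t := by
  refine (intervalIntegral.integral_congr fun s _ => ?_).trans (intervalIntegral.integral_sub
    (intervalIntegrable_integral_upper hf) (intervalIntegrable_integral_upper hg))
  exact intervalIntegral.integral_sub ((hf.uncurry_left s).intervalIntegrable _ _)
    ((hg.uncurry_left s).intervalIntegrable _ _)

end Triangle

lemma integrable_comp_sub_prod_restrict {W : ℝ → ℝ} (hW : Integrable W) (c d : ℝ) :
    Integrable (fun p : ℝ × ℝ => W (p.2 - p.1))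
      ((volume.restrict (Ioc c d)).prod (volume.restrict (Ioc c d))) := by
  have hconv := (integrable_const (μ := volume.restrict (Ioc c d)) (1 : ℝ)).convolution_integrand
    (ContinuousLinearMap.mul ℝ ℝ) hW (μ := volume)
  simp only [ContinuousLinearMap.mul_apply', one_mul] at hconv
  have hrestrict := hconv.restrict (s := Ioc c d ×ˢ univ)
  rw [← Measure.prod_restrict, Measure.restrict_univ] at hrestrict
  exact hrestrict.swap

theorem integral_mul_integral_eq_integral_primitive_mul {W φ : ℝ → ℝ} (hW : Integrable W)
    (hφ : Continuous φ) {s b : ℝ} (hsb : s ≤ b) :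
    ∫ t in s..b, W (t - s) * ∫ τ in t..b, φ τ = ∫ τ in s..b, (∫ u in 0..τ - s, W u) * φ τ := by
  have hint : Integrable (Function.uncurry fun t τ => W (t - s) * φ τ)
      ((volume.restrict (Ioc s b)).prod (volume.restrict (Ioc s b))) :=
    (hW.comp_sub_right s).restrict.mul_prod hφ.integrableOn_Ioc
  calc ∫ t in s..b, W (t - s) * ∫ τ in t..b, φ τ
      = ∫ t in s..b, ∫ τ in t..b, W (t - s) * φ τ := by
        simp_rw [intervalIntegral.integral_const_mul]
    _ = ∫ τ in s..b, ∫ t in s..τ, W (t - s) * φ τ :=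
        (integral_integral_swap_triangle hsb hint).symm
    _ = ∫ τ in s..b, (∫ u in 0..τ - s, W u) * φ τ := by
        simp_rw [intervalIntegral.integral_mul_const,
          intervalIntegral.integral_comp_sub_right (fun x => W x), sub_self]

section InnerProduct

variable {V : Type*} [NormedAddCommGroup V] [InnerProductSpace ℝ V] [CompleteSpace V]
  {θ : ℝ → V}

lemma hasDerivAt_integral_of_continuous_left (hθ : Continuous θ) (b s : ℝ) :
    HasDerivAt (fun u => ∫ t in u..b, θ t) (-θ s) s :=
  intervalIntegral.integral_hasDerivAt_left (hθ.intervalIntegrable _ _)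
    (hθ.stronglyMeasurableAtFilter _ _) hθ.continuousAt

lemma intervalIntegral_inner_left (hθ : Continuous θ) (x : V) (a b : ℝ) :
    ∫ t in a..b, ⟪x, θ t⟫ = ⟪x, ∫ t in a..b, θ t⟫ :=
  (innerSL ℝ x).intervalIntegral_comp_comm (hθ.intervalIntegrable a b)

theorem integral_integral_inner_eq_half_norm_sq (hθ : Continuous θ) (a b : ℝ) :
    ∫ s in a..b, ∫ t in s..b, ⟪θ s, θ t⟫ = ‖∫ t in a..b, θ t‖ ^ 2 / 2 := by
  set v : ℝ → V := fun s => ∫ t in s..b, θ t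
  have hv : ∀ s, HasDerivAt v (-θ s) s := hasDerivAt_integral_of_continuous_left hθ b
  have hvcont : Continuous v := continuous_iff_continuousAt.2 fun s => (hv s).continuousAt
  have hderiv : ∀ s ∈ uIcc a b, HasDerivAt (‖v ·‖ ^ 2) (-(2 * ⟪θ s, v s⟫)) s := fun s _ => by
    simpa [inner_neg_right, real_inner_comm] using (hv s).norm_sq
  have hFTC := intervalIntegral.integral_eq_sub_of_hasDerivAt hderiv
    ((continuous_const.mul (hθ.inner hvcont)).neg.intervalIntegrable a b)
  simp only [v, intervalIntegral.integral_same, norm_zero, intervalIntegral.integral_neg,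
    intervalIntegral.integral_const_mul] at hFTC
  simp_rw [intervalIntegral_inner_left hθ]
  linarith

theorem integral_integral_kernel_mul_inner_eq {W : ℝ → ℝ} (hW : Integrable W)
    (hθ : Continuous θ) {a b : ℝ} (hab : a ≤ b) :
    ∫ t in a..b, ∫ s in a..t, W (t - s) * ⟪θ s, ∫ τ in t..b, θ τ⟫
      = ∫ s in a..b, ∫ t in s..b, (∫ u in 0..t - s, W u) * ⟪θ s, θ t⟫ := by
  set v : ℝ → V := fun t => ∫ τ in t..b, θ τ
  have hv : Continuous v := continuous_iff_continuousAt.2 fun t =>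
    (hasDerivAt_integral_of_continuous_left hθ b t).continuousAt
  have hP : Continuous fun p : ℝ × ℝ => ⟪θ p.1, v p.2⟫ :=
    (hθ.comp continuous_fst).inner (hv.comp continuous_snd)
  obtain ⟨C, hC⟩ := (isCompact_Icc.prod isCompact_Icc).exists_bound_of_continuousOn
    (s := Icc a b ×ˢ Icc a b) hP.continuousOn
  have hint : Integrable (Function.uncurry fun s t => W (t - s) * ⟪θ s, v t⟫)
      ((volume.restrict (Ioc a b)).prod (volume.restrict (Ioc a b))) := by
    refine (integrable_comp_sub_prod_restrict hW a b).mul_bdd (c := C)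
      hP.aestronglyMeasurable ?_
    rw [Measure.prod_restrict]
    filter_upwards [ae_restrict_mem (measurableSet_Ioc.prod measurableSet_Ioc)] with p hp
    exact hC p ⟨Ioc_subset_Icc_self hp.1, Ioc_subset_Icc_self hp.2⟩
  rw [integral_integral_swap_triangle hab hint]
  refine intervalIntegral.integral_congr fun s hs => ?_
  simp_rw [v, ← intervalIntegral_inner_left hθ]
  exact integral_mul_integral_eq_integral_primitive_mul hW (continuous_const.inner hθ)
    (uIcc_of_le hab ▸ hs).2

theorem memory_term_identity_of_integrable {W : ℝ → ℝ} (hW : Integrable W)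
    (hθ : Continuous θ) {a b : ℝ} (hab : a ≤ b) (κ : ℝ) :
    (-2 : ℝ) * ∫ t in a..b, ∫ s in a..t, W (t - s) * ⟪θ s, ∫ τ in t..b, θ τ⟫
      = -κ * ‖∫ τ in a..b, θ τ‖ ^ 2
        + 2 * ∫ s in a..b, ∫ t in s..b, (κ - ∫ u in 0..t - s, W u) * ⟪θ s, θ t⟫ := by
  have hP : Continuous fun r => ∫ u in 0..r, W u :=
    intervalIntegral.continuous_primitive (fun _ _ => hW.intervalIntegrable) 0
  simp_rw [sub_mul]
  rw [integral_integral_kernel_mul_inner_eq hW hθ hab,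
    integral_integral_sub_of_continuous (by fun_prop) (by fun_prop)]
  simp_rw [intervalIntegral.integral_const_mul]
  rw [integral_integral_inner_eq_half_norm_sq hθ]
  ring

end InnerProduct

theorem memory_term_identity_general
    {V : Type*} [NormedAddCommGroup V] [InnerProductSpace ℝ V] [CompleteSpace V]
    (T ε κ : ℝ) (hε : ε ∈ Set.Ioc (0:ℝ) T)
    (K : ℝ → ℝ)
    (hKint : IntervalIntegrable K volume 0 T)
    (ξ : ℝ → ℝ) (hξ : ∀ t, ξ t = ∫ s in t..T, K s) (hκ : κ = ξ 0)
    (θ : ℝ → V) (hθ : Continuous θ)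
    (v : ℝ → V) (hv : ∀ t, v t = ∫ τ in t..ε, θ τ) :
    (-2 : ℝ) * ∫ t in (0:ℝ)..ε, ∫ s in (0:ℝ)..t, K (t - s) * ⟪θ s, v t⟫
      = -κ * ‖v 0‖ ^ 2
        + 2 * ∫ s in (0:ℝ)..ε, ∫ t in s..ε, ξ (t - s) * ⟪θ s, θ t⟫ := by
  obtain ⟨hε0, hεT⟩ := hε
  have hT : 0 ≤ T := hε0.le.trans hεT
  obtain rfl : v = fun t => ∫ τ in t..ε, θ τ := funext hv
  set W : ℝ → ℝ := (Icc 0 T).indicator K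
  have hW : Integrable W := (integrable_indicator_iff measurableSet_Icc).2
    ((intervalIntegrable_iff_integrableOn_Icc_of_le hT).1 hKint)
  have hWK : EqOn W K (Icc 0 T) := fun r hr => indicator_of_mem hr K
  have hξW : ∀ r ∈ Icc 0 T, ξ r = κ - ∫ u in 0..r, W u := by
    intro r hr
    have hsub : uIcc 0 r ⊆ Icc 0 T := by
      rw [uIcc_of_le hr.1]
      exact Icc_subset_Icc_right hr.2
    rw [intervalIntegral.integral_congr (hWK.mono hsub), hκ, hξ, hξ,
      ← intervalIntegral.integral_interval_sub_left hKint
        (hKint.mono_set (by rwa [uIcc_of_le hT]))]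
  have hmem : ∀ s t, 0 ≤ s → s ≤ t → t ≤ ε → t - s ∈ Icc 0 T := fun s t _ hst ht =>
    ⟨sub_nonneg.2 hst, by linarith⟩
  rw [integral_integral_congr_lower hε0.le (f := fun s t => K (t - s) * _)
      (g := fun s t => W (t - s) * _) fun s t hs hst ht => by rw [hWK (hmem s t hs hst ht)],
    integral_integral_congr_upper hε0.le (f := fun s t => ξ (t - s) * ⟪θ s, θ t⟫)
      fun s t hs hst ht => by rw [hξW _ (hmem s t hs hst ht)]]
  exact memory_term_identity_of_integrable hW hθ hε0.le κ

/-- Key algebraic identity in the energy error analysis: with `ξ(t) = ∫ₜᵀ K(s) ds`,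
`κ = ξ(0)`, and `v(t) = ∫ₜ^ε θ(τ) dτ` (so `v(ε) = 0`, `v̇ = -θ`),
`-2∫₀^ε ∫₀ᵗ K(t-s) a(θ(s), v(t)) ds dt
  = -κ ‖v(0)‖²_V + 2∫₀^ε ∫ₛ^ε ξ(t-s) a(θ(s), θ(t)) dt ds`,
where `a` is the inner product of `V` and `‖w‖²_V = a(w,w)`. -/
theorem memory_term_identity
    {V : Type*} [NormedAddCommGroup V] [InnerProductSpace ℝ V] [CompleteSpace V]
    (T ε κ : ℝ) (hT : 0 < T) (hε : ε ∈ Set.Ioc (0:ℝ) T)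
    (K : ℝ → ℝ) (hK0 : ∀ s ∈ Set.Icc (0:ℝ) T, 0 ≤ K s)
    (hKint : IntervalIntegrable K volume 0 T)
    (ξ : ℝ → ℝ) (hξ : ∀ t, ξ t = ∫ s in t..T, K s) (hκ : κ = ξ 0)
    (θ : ℝ → V) (hθ : Continuous θ)
    (v : ℝ → V) (hv : ∀ t, v t = ∫ τ in t..ε, θ τ) :
    (-2 : ℝ) * ∫ t in (0:ℝ)..ε, ∫ s in (0:ℝ)..t, K (t - s) * ⟪θ s, v t⟫
      = -κ * ‖v 0‖ ^ 2
        + 2 * ∫ s in (0:ℝ)..ε, ∫ t in s..ε, ξ (t - s) * ⟪θ s, θ t⟫ :=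
  memory_term_identity_general T ε κ hε K hKint ξ hξ hκ θ hθ v hv
end

section
/- Let K ∈ L¹(0,T) be nonnegative with tail ξ(t) = ∫ₜᵀ K(s)ds, ξ(0) = κ < 1, and let θ : [0,T] → V be continuously differentiable (with values in a space with symmetric bilinear form a and norm ‖·‖_V) with θ(0) = 0. Then the identity −2∫₀ᵗ∫₀^τ K(τ−s) a(θ(s), θ̇(τ)) ds dτ = −κ‖θ(t)‖²_V + 2∫₀ᵗ∫₀^τ ξ(τ−s) a(θ̇(s), θ̇(τ)) ds dτ holds. -/
/-!
For fixed `τ`, put `c(s) = ⟪θ s, θ' τ⟫`, so that `c(s) = ∫₀ˢ c'` because `θ 0 = 0`. Fubini over the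
triangle `u, r > 0, u + r ≤ τ` turns `∫₀^τ K(τ-s) c(s) ds` into `∫₀^τ (∫₀^{τ-s} K) c'(s) ds`
`= κ c(τ) - ∫₀^τ ξ(τ-s) c'(s) ds`: this is the integration by parts `K(τ-s) = d/ds ξ(τ-s)`, which
cannot be done literally since `K` is merely integrable. Integrating over `τ ∈ [0,t]` and using
`∫₀ᵗ ⟪θ, θ'⟫ = ‖θ t‖² / 2` gives the identity.
-/

open MeasureTheory Set
open scoped RealInnerProductSpace

theorem setIntegral_Ioc_indicator_Iic {g : ℝ → ℝ} {a x : ℝ} (hx : 0 ≤ x) (hxa : x ≤ a) :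
    ∫ r in Ioc 0 a, (Iic x).indicator g r = ∫ r in 0..x, g r := by
  rw [setIntegral_indicator measurableSet_Iic, Ioc_inter_Iic, inf_eq_right.2 hxa,
    intervalIntegral.integral_of_le hx]

/-- Fubini over the triangle `u, r > 0, u + r ≤ a`. -/
theorem integral_mul_integral_sub_comm {f g : ℝ → ℝ} {a : ℝ} (ha : 0 ≤ a)
    (hf : IntegrableOn f (Ioc 0 a)) (hg : IntegrableOn g (Ioc 0 a)) :
    ∫ u in 0..a, f u * ∫ r in 0..(a - u), g r =
      ∫ r in 0..a, (∫ u in 0..(a - r), f u) * g r := by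
  have hsymm : ∀ u r, f u * (Iic (a - u)).indicator g r = (Iic (a - r)).indicator f u * g r := by
    intro u r
    simp only [indicator_apply, mem_Iic, le_sub_iff_add_le, add_comm u r]
    split_ifs <;> simp
  have hint : Integrable (Function.uncurry fun u r => f u * (Iic (a - u)).indicator g r)
      ((volume.restrict (Ioc 0 a)).prod (volume.restrict (Ioc 0 a))) := by
    have : (Function.uncurry fun u r => f u * (Iic (a - u)).indicator g r) =
        {p : ℝ × ℝ | p.1 + p.2 ≤ a}.indicator fun p => f p.1 * g p.2 := by
      ext ⟨u, r⟩
      simp only [Function.uncurry_apply_pair, indicator_apply, mem_Iic, mem_ofPred_eq,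
        le_sub_iff_add_le']
      split_ifs <;> simp
    rw [this]
    exact (hf.mul_prod hg).indicator (measurableSet_le (by fun_prop) measurable_const)
  rw [intervalIntegral.integral_of_le ha, intervalIntegral.integral_of_le ha]
  calc ∫ u in Ioc 0 a, f u * ∫ r in 0..(a - u), g r
      = ∫ u in Ioc 0 a, ∫ r in Ioc 0 a, f u * (Iic (a - u)).indicator g r := by
        refine setIntegral_congr_fun measurableSet_Ioc fun u hu => ?_
        rw [integral_const_mul, setIntegral_Ioc_indicator_Iic (by linarith [hu.2])
          (by linarith [hu.1])]
    _ = ∫ r in Ioc 0 a, ∫ u in Ioc 0 a, (Iic (a - r)).indicator f u * g r := by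
        simpa only [hsymm] using integral_integral_swap hint
    _ = ∫ r in Ioc 0 a, (∫ u in 0..(a - r), f u) * g r := by
        refine setIntegral_congr_fun measurableSet_Ioc fun r hr => ?_
        rw [integral_mul_const, setIntegral_Ioc_indicator_Iic (by linarith [hr.2])
          (by linarith [hr.1])]

theorem integral_comp_sub_mul_eq_integral_primitive_mul {K c c' : ℝ → ℝ} {τ : ℝ} (hτ : 0 ≤ τ)
    (hK : IntegrableOn K (Ioc 0 τ)) (hc : ∀ s, HasDerivAt c (c' s) s) (hc' : Continuous c')
    (hc0 : c 0 = 0) :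
    ∫ s in 0..τ, K (τ - s) * c s = ∫ s in 0..τ, (∫ u in 0..(τ - s), K u) * c' s := by
  have hprim : ∀ x, c x = ∫ r in 0..x, c' r := fun x => by
    rw [intervalIntegral.integral_eq_sub_of_hasDerivAt (fun r _ => hc r)
      (hc'.intervalIntegrable 0 x), hc0, sub_zero]
  calc ∫ s in 0..τ, K (τ - s) * c s = ∫ u in 0..τ, K u * c (τ - u) := by
        simpa using
          intervalIntegral.integral_comp_sub_left (a := 0) (b := τ) (fun u => K u * c (τ - u)) τ
    _ = ∫ u in 0..τ, K u * ∫ r in 0..(τ - u), c' r := by simp only [← hprim]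
    _ = _ := integral_mul_integral_sub_comm hτ hK hc'.integrableOn_Ioc

theorem continuousOn_integral_tail {K : ℝ → ℝ} {T : ℝ} (hK : IntervalIntegrable K volume 0 T) :
    ContinuousOn (fun x => ∫ u in x..T, K u) (uIcc 0 T) := by
  rw [uIcc_comm]
  refine (intervalIntegral.continuousOn_primitive_interval' hK.symm left_mem_uIcc).neg.congr
    fun x _ => ?_
  exact intervalIntegral.integral_symm T x

theorem integral_comp_sub_mul_eq_integral_tail_mul {K c c' : ℝ → ℝ} {T τ : ℝ}
    (hτ : τ ∈ Icc 0 T) (hK : IntervalIntegrable K volume 0 T)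
    (hc : ∀ s, HasDerivAt c (c' s) s) (hc' : Continuous c') (hc0 : c 0 = 0) :
    ∫ s in 0..τ, K (τ - s) * c s =
      (∫ u in 0..T, K u) * c τ - ∫ s in 0..τ, (∫ u in (τ - s)..T, K u) * c' s := by
  have hKsub : ∀ x ∈ Icc 0 T, IntervalIntegrable K volume 0 x := fun x hx =>
    hK.mono_set ((uIcc_subset_Icc (left_mem_Icc.2 (hx.1.trans hx.2)) hx).trans Icc_subset_uIcc)
  have hmem : ∀ s ∈ uIcc 0 τ, τ - s ∈ Icc 0 T := fun s hs => by
    rw [uIcc_of_le hτ.1] at hs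
    exact ⟨by linarith [hs.2], by linarith [hs.1, hτ.2]⟩
  have hsplit : ∀ s ∈ uIcc 0 τ, (∫ u in 0..(τ - s), K u) * c' s =
      (∫ u in 0..T, K u) * c' s - (∫ u in (τ - s)..T, K u) * c' s := fun s hs => by
    rw [← sub_mul, ← intervalIntegral.integral_interval_sub_left hK (hKsub _ (hmem s hs)),
      sub_sub_cancel]
  have htail : IntervalIntegrable (fun s => (∫ u in (τ - s)..T, K u) * c' s) volume 0 τ := by
    refine ContinuousOn.intervalIntegrable (ContinuousOn.mul ?_ hc'.continuousOn)
    exact (continuousOn_integral_tail hK).comp (by fun_prop)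
      fun s hs => Icc_subset_uIcc (hmem s hs)
  rw [integral_comp_sub_mul_eq_integral_primitive_mul hτ.1 (hKsub τ hτ).1 hc hc' hc0,
    intervalIntegral.integral_congr hsplit,
    intervalIntegral.integral_sub ((hc'.intervalIntegrable _ _).const_mul _) htail,
    intervalIntegral.integral_const_mul,
    intervalIntegral.integral_eq_sub_of_hasDerivAt (fun s _ => hc s) (hc'.intervalIntegrable _ _),
    hc0, sub_zero]

theorem ContinuousOn.integral_comp_sub_mul {ξ : ℝ → ℝ} {g : ℝ → ℝ → ℝ} {T : ℝ}
    (hξ : ContinuousOn ξ (Icc 0 T)) (hg : Continuous (Function.uncurry g)) :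
    ContinuousOn (fun τ => ∫ s in 0..τ, ξ (τ - s) * g τ s) (Icc 0 T) := by
  rcases lt_or_ge T 0 with hT | hT
  · simp [Icc_eq_empty_of_lt hT]
  set ζ := IccExtend hT ((Icc 0 T).domRestrict ξ) with hζ_def
  have hζ : Continuous ζ := continuous_IccExtend_iff.2 hξ.domRestrict
  refine (intervalIntegral.continuous_parametric_intervalIntegral_of_continuous
    (f := fun τ s => ζ (τ - s) * g τ s) ((hζ.comp (by fun_prop)).mul hg) continuous_id
    ).continuousOn.congr fun τ hτ => intervalIntegral.integral_congr fun s hs => ?_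
  rw [uIcc_of_le hτ.1] at hs
  have hmem : τ - s ∈ Icc 0 T := ⟨by linarith [hs.2], by linarith [hs.1, hτ.2]⟩
  rw [hζ_def, IccExtend_of_mem _ _ hmem]
  rfl

theorem integral_inner_eq_half_norm_sq_sub {V : Type*} [NormedAddCommGroup V]
    [InnerProductSpace ℝ V] {θ θ' : ℝ → V} (hθ : ∀ t, HasDerivAt θ (θ' t) t)
    (hθ' : Continuous θ') (a b : ℝ) :
    ∫ τ in a..b, ⟪θ τ, θ' τ⟫ = (‖θ b‖ ^ 2 - ‖θ a‖ ^ 2) / 2 := by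
  have hθc : Continuous θ := continuous_iff_continuousAt.2 fun t => (hθ t).continuousAt
  rw [← intervalIntegral.integral_eq_sub_of_hasDerivAt (fun t _ => (hθ t).norm_sq)
    ((continuous_const.mul (hθc.inner hθ')).intervalIntegrable _ _),
    intervalIntegral.integral_const_mul]
  ring

theorem velocity_memory_identity_general
    {V : Type*} [NormedAddCommGroup V] [InnerProductSpace ℝ V]
    (T κ : ℝ)
    (K : ℝ → ℝ)
    (hKint : IntervalIntegrable K volume 0 T)
    (ξ : ℝ → ℝ) (hξ : ∀ t, ξ t = ∫ s in t..T, K s)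
    (hκ : ξ 0 = κ)
    (θ θ' : ℝ → V) (hθ : ∀ t, HasDerivAt θ (θ' t) t) (hθ'c : Continuous θ')
    (hθ0 : θ 0 = 0) :
    ∀ t ∈ Set.Icc (0:ℝ) T,
      (-2 : ℝ) * ∫ τ in (0:ℝ)..t, ∫ s in (0:ℝ)..τ, K (τ - s) * ⟪θ s, θ' τ⟫
        = -κ * ‖θ t‖ ^ 2
          + 2 * ∫ τ in (0:ℝ)..t, ∫ s in (0:ℝ)..τ, ξ (τ - s) * ⟪θ' s, θ' τ⟫ := by
  rintro t ⟨ht0, htT⟩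
  have hθc : Continuous θ := continuous_iff_continuousAt.2 fun t => (hθ t).continuousAt
  have hinner : ∀ τ ∈ uIcc 0 t, ∫ s in 0..τ, K (τ - s) * ⟪θ s, θ' τ⟫ =
      κ * ⟪θ τ, θ' τ⟫ - ∫ s in 0..τ, ξ (τ - s) * ⟪θ' s, θ' τ⟫ := fun τ hτ => by
    rw [uIcc_of_le ht0] at hτ
    simpa only [← hξ, hκ] using integral_comp_sub_mul_eq_integral_tail_mul
      ⟨hτ.1, hτ.2.trans htT⟩ hKint (c := fun s => ⟪θ s, θ' τ⟫)
      (fun s => by simpa using (hθ s).inner ℝ (hasDerivAt_const s (θ' τ))) (by fun_prop)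
      (by simp [hθ0])
  have hmemory :
      IntervalIntegrable (fun τ => ∫ s in 0..τ, ξ (τ - s) * ⟪θ' s, θ' τ⟫) volume 0 t := by
    have hξc : ContinuousOn ξ (Icc 0 T) :=
      ((continuousOn_integral_tail hKint).mono Icc_subset_uIcc).congr fun x _ => hξ x
    exact ((hξc.integral_comp_sub_mul (g := fun τ s => ⟪θ' s, θ' τ⟫) (by fun_prop)).mono
      (Icc_subset_Icc_right htT)).intervalIntegrable_of_Icc ht0
  rw [intervalIntegral.integral_congr hinner,
    intervalIntegral.integral_sub (((hθc.inner hθ'c).intervalIntegrable _ _).const_mul _)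
      hmemory, intervalIntegral.integral_const_mul, integral_inner_eq_half_norm_sq_sub hθ hθ'c,
    hθ0, norm_zero]
  ring

/-- Key identity for the velocity/H¹ error estimates: if `K ≥ 0` is integrable on
`[0,T]` with tail `ξ(t) = ∫ₜᵀ K(s) ds`, `ξ(0) = κ < 1`, and `θ` is C¹ with `θ(0) = 0`,
then `-2∫₀ᵗ∫₀^τ K(τ-s) a(θ(s), θ̇(τ)) ds dτ
  = -κ ‖θ(t)‖²_V + 2∫₀ᵗ∫₀^τ ξ(τ-s) a(θ̇(s), θ̇(τ)) ds dτ`,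
where `a` is the inner product of `V` and `‖·‖_V` the associated norm. -/
theorem velocity_memory_identity
    {V : Type*} [NormedAddCommGroup V] [InnerProductSpace ℝ V] [CompleteSpace V]
    (T κ : ℝ) (hT : 0 < T)
    (K : ℝ → ℝ) (hK0 : ∀ s ∈ Set.Icc (0:ℝ) T, 0 ≤ K s)
    (hKint : IntervalIntegrable K volume 0 T)
    (ξ : ℝ → ℝ) (hξ : ∀ t, ξ t = ∫ s in t..T, K s)
    (hκ : ξ 0 = κ) (hκ1 : κ < 1)
    (θ θ' : ℝ → V) (hθ : ∀ t, HasDerivAt θ (θ' t) t) (hθ'c : Continuous θ')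
    (hθ0 : θ 0 = 0) :
    ∀ t ∈ Set.Icc (0:ℝ) T,
      (-2 : ℝ) * ∫ τ in (0:ℝ)..t, ∫ s in (0:ℝ)..τ, K (τ - s) * ⟪θ s, θ' τ⟫
        = -κ * ‖θ t‖ ^ 2
          + 2 * ∫ τ in (0:ℝ)..t, ∫ s in (0:ℝ)..τ, ξ (τ - s) * ⟪θ' s, θ' τ⟫ :=
  velocity_memory_identity_general T κ K hKint ξ hξ hκ θ θ' hθ hθ'c hθ0
end
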